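/- For a nodal Lagrange basis φ_p at M+1 distinct nodes in [0,1] forming a basis of polynomials of degree ≤ M, the matrix M₁ − M_V with (M₁)_{pq} = φ_p(1)φ_q(1) and (M_V)_{pq} = ∫₀¹ φ_p'(ξ)φ_q(ξ)dξ is invertible. -/
import Mathlib


open Matrix

open MeasureTheory intervalIntegral Polynomial in
lemma poly_ftc (p : Polynomial ℝ) :
    ∫ x in (0:ℝ)..1, p.derivative.eval x = p.eval 1 - p.eval 0 := by
  have hd : deriv (fun x : ℝ => p.eval x) = fun x => p.derivative.eval x := by
    funext x; exact p.deriv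
  exact intervalIntegral.integral_deriv_eq_sub' _ hd
    (fun x _ => p.differentiableAt) ((p.derivative.continuous_aeval).continuousOn)

open MeasureTheory intervalIntegral Polynomial in
lemma poly_sq_integral_zero (p : Polynomial ℝ)
    (h : ∫ x in (0:ℝ)..1, (p.eval x) * (p.eval x) = 0) : p = 0 := by
  by_contra hp
  have hfin : Set.Finite {x : ℝ | p.IsRoot x} := Polynomial.finite_setOf_isRoot hp
  have hint : IntervalIntegrable (fun x => p.eval x * p.eval x) volume 0 1 :=
    ((p.continuous_aeval).mul (p.continuous_aeval)).intervalIntegrable 0 1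
  have hpos : 0 < ∫ x in (0:ℝ)..1, (p.eval x) * (p.eval x) := by
    rw [intervalIntegral.integral_pos_iff_support_of_nonneg_ae
      (Filter.Eventually.of_forall fun x => mul_self_nonneg _) hint]
    refine ⟨one_pos, ?_⟩
    have hsupp : Function.support (fun x => p.eval x * p.eval x) = {x | ¬ p.IsRoot x} := by
      ext x; simp [Function.mem_support, Polynomial.IsRoot, mul_self_eq_zero]
    rw [hsupp]
    have hsub : Set.Ioc (0:ℝ) 1 \ {x : ℝ | p.IsRoot x} ⊆
        {x : ℝ | ¬ p.IsRoot x} ∩ Set.Ioc 0 1 := fun x hx => ⟨hx.2, hx.1⟩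
    calc (0:ENNReal) < volume (Set.Ioc (0:ℝ) 1 \ {x : ℝ | p.IsRoot x}) := by
          rw [measure_diff_null (hfin.measure_zero _)]; simp
      _ ≤ _ := measure_mono hsub
  exact absurd h (ne_of_gt hpos)

theorem stmt_16 (M : ℕ) (ξ : Fin (M + 1) → ℝ)
    (hξmem : ∀ i, ξ i ∈ Set.Icc (0:ℝ) 1)
    (hξinj : Function.Injective ξ)
    (φ : Fin (M + 1) → Polynomial ℝ)
    (hdeg : ∀ p, (φ p).natDegree ≤ M)
    (hlagr : ∀ p q, (φ p).eval (ξ q) = if p = q then 1 else 0)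
    (M1 MV : Matrix (Fin (M + 1)) (Fin (M + 1)) ℝ)
    (hM1 : ∀ p q, M1 p q = (φ p).eval 1 * (φ q).eval 1)
    (hMV : ∀ p q, MV p q =
      ∫ x in (0:ℝ)..1, ((φ p).derivative.eval x) * (φ q).eval x) :
    IsUnit (M1 - MV) := by
  classical
  have hII : ∀ (u v : Polynomial ℝ), IntervalIntegrable
      (fun x => u.eval x * v.eval x) MeasureTheory.volume 0 1 :=
    fun u v => ((u.continuous_aeval).mul (v.continuous_aeval)).intervalIntegrable 0 1
  -- Lagrange interpolation: every polynomial of natDegree ≤ M is ∑ r(ξ q) • φ q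
  have hinterp : ∀ (r : Polynomial ℝ), r.natDegree ≤ M →
      r = ∑ q, (r.eval (ξ q)) • φ q := by
    intro r hr
    have hd : (r - ∑ q, (r.eval (ξ q)) • φ q) = 0 := by
      apply Polynomial.eq_zero_of_natDegree_lt_card_of_eval_eq_zero _ hξinj
      · intro i
        simp only [Polynomial.eval_sub, Polynomial.eval_finset_sum, Polynomial.eval_smul,
          smul_eq_mul, hlagr]
        rw [Finset.sum_eq_single i (by intro b _ hb; simp [hb]) (by simp)]
        simp
      · have h1 : (∑ q, (r.eval (ξ q)) • φ q).natDegree ≤ M :=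
          Polynomial.natDegree_sum_le_of_forall_le _ _ fun q _ =>
            le_trans (Polynomial.natDegree_smul_le _ _) (hdeg q)
        have := Polynomial.natDegree_sub_le r (∑ q, (r.eval (ξ q)) • φ q)
        simp only [Fintype.card_fin]
        omega
    exact sub_eq_zero.mp hd
  -- it suffices to show the determinant is nonzero
  rw [Matrix.isUnit_iff_isUnit_det, isUnit_iff_ne_zero]
  intro hdet
  obtain ⟨c, hc0, hcA⟩ := Matrix.exists_vecMul_eq_zero_iff.mpr hdet
  -- define Q = ∑ c p • φ p
  set Q : Polynomial ℝ := ∑ p, (c p) • φ p with hQ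
  have hQdeg : Q.natDegree ≤ M :=
    Polynomial.natDegree_sum_le_of_forall_le _ _ fun p _ =>
      le_trans (Polynomial.natDegree_smul_le _ _) (hdeg p)
  have hQeval : ∀ x, Q.eval x = ∑ p, c p * (φ p).eval x := by
    intro x; simp [hQ, Polynomial.eval_finset_sum]
  have hQder : ∀ x, Q.derivative.eval x = ∑ p, c p * (φ p).derivative.eval x := by
    intro x
    simp [hQ, map_sum, Polynomial.eval_finset_sum, Polynomial.derivative_smul]
  -- key identity for each basis element
  have hkey : ∀ q, Q.eval 1 * (φ q).eval 1
      - ∫ x in (0:ℝ)..1, Q.derivative.eval x * (φ q).eval x = 0 := by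
    intro q
    have h1 := congrFun hcA q
    simp only [Matrix.vecMul, dotProduct, Matrix.sub_apply, hM1, hMV,
      Pi.zero_apply] at h1
    have hint : (∫ x in (0:ℝ)..1, Q.derivative.eval x * (φ q).eval x)
        = ∑ p, c p * ∫ x in (0:ℝ)..1, (φ p).derivative.eval x * (φ q).eval x := by
      have : ∀ x, Q.derivative.eval x * (φ q).eval x
          = ∑ p, c p * ((φ p).derivative.eval x * (φ q).eval x) := by
        intro x; rw [hQder]; rw [Finset.sum_mul]; congr 1; ext p; ring
      rw [intervalIntegral.integral_congr (fun x _ => this x),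
        intervalIntegral.integral_finset_sum]
      · congr 1; ext p
        rw [intervalIntegral.integral_const_mul]
      · intro p _
        exact (((φ p).derivative.continuous_aeval).mul
          ((φ q).continuous_aeval)).intervalIntegrable 0 1 |>.const_mul _
    rw [hQeval, hint, Finset.sum_mul, ← Finset.sum_sub_distrib]
    refine Eq.trans ?_ h1
    apply Finset.sum_congr rfl
    intro p _; ring
  -- consequence for arbitrary r of degree ≤ M
  have hkey' : ∀ r : Polynomial ℝ, r.natDegree ≤ M →
      Q.eval 1 * r.eval 1 - (∫ x in (0:ℝ)..1, Q.derivative.eval x * r.eval x) = 0 := by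
    intro r hr
    have hrep := hinterp r hr
    have hre : ∀ x, r.eval x = ∑ q, r.eval (ξ q) * (φ q).eval x := by
      intro x; conv_lhs => rw [hrep]
      simp [Polynomial.eval_finset_sum]
    have hint : (∫ x in (0:ℝ)..1, Q.derivative.eval x * r.eval x)
        = ∑ q, r.eval (ξ q) * ∫ x in (0:ℝ)..1, Q.derivative.eval x * (φ q).eval x := by
      have : ∀ x, Q.derivative.eval x * r.eval x
          = ∑ q, r.eval (ξ q) * (Q.derivative.eval x * (φ q).eval x) := by
        intro x; rw [hre, Finset.mul_sum]; congr 1; ext q; ring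
      rw [intervalIntegral.integral_congr (fun x _ => this x),
        intervalIntegral.integral_finset_sum]
      · congr 1; ext q
        rw [intervalIntegral.integral_const_mul]
      · intro q _
        exact ((Q.derivative.continuous_aeval).mul
          ((φ q).continuous_aeval)).intervalIntegrable 0 1 |>.const_mul _
    rw [hint, hre 1, Finset.mul_sum, ← Finset.sum_sub_distrib]
    rw [Finset.sum_eq_zero]
    intro q _
    have h := hkey q
    have h2 : (∫ x in (0:ℝ)..1, Q.derivative.eval x * (φ q).eval x)
        = Q.eval 1 * (φ q).eval 1 := by linarith
    rw [h2]; ring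
  -- step 1 : take r = Q, get Q(0) = Q(1) = 0
  have hQQ : (∫ x in (0:ℝ)..1, Q.derivative.eval x * Q.eval x)
      = (Q.eval 1 * Q.eval 1 - Q.eval 0 * Q.eval 0) / 2 := by
    have h2 : ∀ x, (Q * Q).derivative.eval x = 2 * (Q.derivative.eval x * Q.eval x) := by
      intro x; simp [Polynomial.derivative_mul]; ring
    have := poly_ftc (Q * Q)
    rw [intervalIntegral.integral_congr (fun x _ => h2 x)] at this
    rw [intervalIntegral.integral_const_mul] at this
    simp only [Polynomial.eval_mul] at this
    linarith
  have hQ1 : Q.eval 1 = 0 ∧ Q.eval 0 = 0 := by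
    have := hkey' Q hQdeg
    rw [hQQ] at this
    constructor <;> nlinarith
  -- step 2 : take r = Q.derivative, get Q' = 0
  have hQ'deg : Q.derivative.natDegree ≤ M :=
    le_trans (Polynomial.natDegree_derivative_le Q) (by omega)
  have hQ'0 : Q.derivative = 0 := by
    apply poly_sq_integral_zero
    have := hkey' Q.derivative hQ'deg
    rw [hQ1.1] at this
    linarith
  -- hence Q = 0
  have hQzero : Q = 0 := by
    have hc : Q = Polynomial.C (Q.coeff 0) := Polynomial.eq_C_of_derivative_eq_zero hQ'0
    have := hQ1.1
    rw [hc] at this ⊢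
    simp only [Polynomial.eval_C] at this
    rw [this]; simp
  -- c = 0, contradiction
  apply hc0
  funext p
  have := hQeval (ξ p)
  rw [hQzero] at this
  simp only [Polynomial.eval_zero, hlagr] at this
  rw [Finset.sum_eq_single p (fun b _ hb => by simp [hb]) (by simp)] at this
  simpa using this.symm
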